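/- Let K be a finite group, Y = K, and let S be the set of all words of length at most 3 in the alphabet Y ∪ Y^{-1} representing the identity in K. Let X = Y ∪ {t} and, in the free group F(X), let R = S ∪ {[a^{t^i}, b^{t^j}] : a, b ∈ Y, i, j ∈ ℤ, i ≠ j} (so that ⟨X | R⟩ presents the wreath product K wr ℤ), and for k ∈ ℕ let R_k = S ∪ {[a^{t^i}, b^{t^j}] : a, b ∈ Y, i ≠ j, |i| ≤ k, |j| ≤ k}. Then every word w ∈ F(X) of length ‖w‖ ≤ k lying in the normal closure ⟪R⟫ lies in the normal closure ⟪R_k⟫. -/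

import Mathlib

open Function

namespace IsoSpecPaper

variable {ι : Type*} {G : Type*} [Group G]

/-- The (reduced) length of an element of a free group. -/
noncomputable def wnorm (w : FreeGroup ι) : ℕ :=
  @FreeGroup.norm ι (Classical.decEq ι) w

/-- `triv φ k` : the set of words of length at most `k` in the generators
(and their inverses) representing the identity of `G` under the marking `φ`. -/
noncomputable def triv (φ : FreeGroup ι →* G) (k : ℕ) : Set (FreeGroup ι) :=
  {w | wnorm w ≤ k ∧ φ w = 1}

/-- `AreaLe R w l` : `w` is a product of `l` conjugates of elements of `R` or
their inverses in the free group. -/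
def AreaLe (R : Set (FreeGroup ι)) (w : FreeGroup ι) (l : ℕ) : Prop :=
  ∃ L : List (FreeGroup ι × FreeGroup ι), L.length = l ∧
    (∀ p ∈ L, p.2 ∈ R ∨ p.2⁻¹ ∈ R) ∧
    w = (L.map fun p => p.1⁻¹ * p.2 * p.1).prod

/-- The area of `w` with respect to the set of relators `R`. -/
noncomputable def area (R : Set (FreeGroup ι)) (w : FreeGroup ι) : ℕ :=
  sInf {l | AreaLe R w l}

/-- The isoperimetric spectrum of the marked group `(G, φ)`:
`isoSpec φ k m n = max { area_{S_m}(w) : w ∈ ⟪S_k⟫, ‖w‖ ≤ n }`. -/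
noncomputable def isoSpec (φ : FreeGroup ι →* G) (k m n : ℕ) : ℕ :=
  sSup (area (triv φ m) '' {w | w ∈ Subgroup.normalClosure (triv φ k) ∧ wnorm w ≤ n})

/-- The real-valued isoperimetric spectrum. -/
noncomputable def isoSpecR (φ : FreeGroup ι →* G) : ℕ → ℕ → ℕ → ℝ :=
  fun k m n => (isoSpec φ k m n : ℝ)

/-- The Dehn function of the presentation with relators `R`. -/
noncomputable def dehn (R : Set (FreeGroup ι)) (n : ℕ) : ℕ :=
  sSup (area R '' {w | w ∈ Subgroup.normalClosure R ∧ wnorm w ≤ n})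

/-- The quasi-order `f ≼ g` on functions of triples `(k,m,n)` of positive integers
with `m ≥ k`. -/
def SpecLE (f g : ℕ → ℕ → ℕ → ℝ) : Prop :=
  ∃ C : ℕ, 0 < C ∧ ∀ k m n : ℕ, 0 < k → 0 < m → 0 < n → C * k ≤ m →
    f k (C * m) n ≤ C * g (C * k) m (C * n) + C * (n : ℝ) / m + C

/-- Equivalence of isoperimetric functions: `f ∼ g`. -/
def SpecEquiv (f g : ℕ → ℕ → ℕ → ℝ) : Prop := SpecLE f g ∧ SpecLE g f

/-- The linear spectrum `(k,m,n) ↦ n/m`. -/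
noncomputable def linSpec : ℕ → ℕ → ℕ → ℝ := fun _ m n => (n : ℝ) / m

/-- The word length of `g ∈ G` with respect to the marking `φ`. -/
noncomputable def wlen (φ : FreeGroup ι →* G) (g : G) : ℕ :=
  sInf {n | ∃ w : FreeGroup ι, wnorm w = n ∧ φ w = g}

/-- The word metric on `G` with respect to the marking `φ`. -/
noncomputable def wdist (φ : FreeGroup ι →* G) (g h : G) : ℕ := wlen φ (g⁻¹ * h)

/-- Quasi-isometry of marked groups with respect to their word metrics. -/
noncomputable def QuasiIsometric {H : Type*} [Group H] {κ : Type*}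
    (φ : FreeGroup ι →* G) (ψ : FreeGroup κ →* H) : Prop :=
  ∃ L : ℝ, 0 ≤ L ∧ ∃ (α : G → H) (β : H → G),
    (∀ x y : G, (wdist ψ (α x) (α y) : ℝ) ≤ L * wdist φ x y + L) ∧
    (∀ u v : H, (wdist φ (β u) (β v) : ℝ) ≤ L * wdist ψ u v + L) ∧
    (∀ t : H, (wdist ψ (α (β t)) t : ℝ) ≤ L) ∧
    (∀ s : G, (wdist φ (β (α s)) s : ℝ) ≤ L)

/-- A (combinatorial) geodesic path of length `n` in the Cayley graph of `(G, φ)`: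
consecutive vertices are at distance at most `1` and the endpoints are at
distance exactly `n`. -/
noncomputable def IsGeodesic (φ : FreeGroup ι →* G) {n : ℕ} (p : Fin (n + 1) → G) : Prop :=
  (∀ i : Fin n, wdist φ (p i.castSucc) (p i.succ) ≤ 1) ∧
  wdist φ (p 0) (p (Fin.last n)) = n

/-- Every vertex of the path `p` lies within distance `δ` of the set `A`. -/
noncomputable def ThinAt (φ : FreeGroup ι →* G) (δ : ℝ) {n : ℕ}
    (p : Fin (n + 1) → G) (A : Set G) : Prop :=
  ∀ i, ∃ a ∈ A, (wdist φ (p i) a : ℝ) ≤ δ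

/-- The Cayley graph of `(G, φ)` is `δ`-hyperbolic: every geodesic triangle is `δ`-thin. -/
noncomputable def HypConst (φ : FreeGroup ι →* G) (δ : ℝ) : Prop :=
  ∀ (n₁ n₂ n₃ : ℕ) (p : Fin (n₁ + 1) → G) (q : Fin (n₂ + 1) → G) (r : Fin (n₃ + 1) → G),
    IsGeodesic φ p → IsGeodesic φ q → IsGeodesic φ r →
    p (Fin.last n₁) = q 0 → q (Fin.last n₂) = r 0 → r (Fin.last n₃) = p 0 →
    ThinAt φ δ p (Set.range q ∪ Set.range r) ∧
    ThinAt φ δ q (Set.range r ∪ Set.range p) ∧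
    ThinAt φ δ r (Set.range p ∪ Set.range q)

/-- The marked group `(G, φ)` is hyperbolic. -/
noncomputable def IsHyperbolic (φ : FreeGroup ι →* G) : Prop :=
  ∃ δ : ℝ, 0 ≤ δ ∧ HypConst φ δ

/-- `G` (marked by `φ`) is a limit (direct limit) of hyperbolic groups. -/
noncomputable def LimitOfHyperbolic (φ : FreeGroup ι →* G) : Prop :=
  Surjective φ ∧ ∃ R : ℕ → Set (FreeGroup ι),
    (∀ i j, i ≤ j → R i ⊆ R j) ∧
    φ.ker = Subgroup.normalClosure (⋃ i, R i) ∧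
    ∀ i, IsHyperbolic (QuotientGroup.mk' (Subgroup.normalClosure (R i)))

/-- `G` (marked by `φ`) is well-approximated by hyperbolic groups. -/
noncomputable def WellApproximated (φ : FreeGroup ι →* G) : Prop :=
  Surjective φ ∧ ∃ R : ℕ → Set (FreeGroup ι),
    (∀ i j, i ≤ j → R i ⊆ R j) ∧
    φ.ker = Subgroup.normalClosure (⋃ i, R i) ∧
    (∀ i, IsHyperbolic (QuotientGroup.mk' (Subgroup.normalClosure (R i)))) ∧
    ∃ C : ℕ, 0 < C ∧ ∀ i : ℕ, 0 < i →
      (∀ w : FreeGroup ι, wnorm w ≤ i → φ w = 1 →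
        w ∈ Subgroup.normalClosure (R i)) ∧
      HypConst (QuotientGroup.mk' (Subgroup.normalClosure (R i))) ((C * i : ℕ) : ℝ)

variable (K : Type) [Group K]

/-- The generator `t` of the `ℤ`-factor, inside the free group on `X = K ⊕ {t}`. -/
def tGen : FreeGroup (K ⊕ Unit) := FreeGroup.of (Sum.inr ())

/-- The generator corresponding to `a ∈ K = Y`. -/
def yGen (a : K) : FreeGroup (K ⊕ Unit) := FreeGroup.of (Sum.inl a)

/-- Conjugation `x^{t^i} = (t^i)⁻¹ x t^i`. -/
def conjT (x : FreeGroup (K ⊕ Unit)) (i : ℤ) : FreeGroup (K ⊕ Unit) :=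
  (tGen K ^ i)⁻¹ * x * tGen K ^ i

/-- The commutator `[x, y] = x⁻¹ y⁻¹ x y`. -/
def commE {H : Type*} [Group H] (x y : H) : H := x⁻¹ * y⁻¹ * x * y

/-- The set `S` of all words of length at most `3` in the alphabet `Y ∪ Y⁻¹` (with
`Y = K`) representing the identity of `K`. -/
noncomputable def wreathS : Set (FreeGroup (K ⊕ Unit)) :=
  (FreeGroup.map (Sum.inl : K → K ⊕ Unit)) ''
    {u : FreeGroup K | wnorm u ≤ 3 ∧ FreeGroup.lift (id : K → K) u = 1}

/-- The full set of relators `R = S ∪ {[a^{t^i}, b^{t^j}] : a, b ∈ Y, i ≠ j}` of the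
standard presentation of `K wr ℤ`. -/
noncomputable def wreathR : Set (FreeGroup (K ⊕ Unit)) :=
  wreathS K ∪
    {w | ∃ (a b : K) (i j : ℤ), i ≠ j ∧
      w = commE (conjT K (yGen K a) i) (conjT K (yGen K b) j)}

/-- The truncated set of relators `R_k` with `|i|, |j| ≤ k`. -/
noncomputable def wreathRk (k : ℕ) : Set (FreeGroup (K ⊕ Unit)) :=
  wreathS K ∪
    {w | ∃ (a b : K) (i j : ℤ), i ≠ j ∧ |i| ≤ (k : ℤ) ∧ |j| ≤ (k : ℤ) ∧
      w = commE (conjT K (yGen K a) i) (conjT K (yGen K b) j)}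

/-!
Write a word of length at most `k` as a product of `t`-conjugates `a^{t^i}` of letters of `K`,
with `|i| ≤ k`, followed by a power `t^m`. Modulo `R_k`, the relators in `S` make each
`a ↦ a^{t^i}` a homomorphism and the truncated commutators make the levels `|i| ≤ k` commute with
each other, so together they form a homomorphic image of `∏_{|i| ≤ k} K`. Evaluating the word in
`K ≀ ℤ` shows that `m = 0` and that the letters on each level multiply to `1`, so the word is
trivial modulo `R_k`.
-/

open Multiplicative

theorem commE_eq_one_iff {H : Type*} [Group H] {x y : H} : commE x y = 1 ↔ Commute x y := by
  rw [commE, ← mul_inv_rev, mul_assoc, inv_mul_eq_one]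
  exact eq_comm

theorem map_commE {H H' : Type*} [Group H] [Group H'] (f : H →* H') (x y : H) :
    f (commE x y) = commE (f x) (f y) := by
  simp only [commE, map_mul, map_inv]

theorem yGen_eq_map_inl_of {α : Type} (a : α) :
    yGen α a = FreeGroup.map Sum.inl (FreeGroup.of a) :=
  FreeGroup.map.of.symm

section Decomposition

variable {α A : Type*}

theorem zpow_mul_prod_conj_zpow (t : G) (y : A → G) (ε : ℤ) (L : List (A × ℤ)) :
    t ^ ε * (L.map fun p => (t ^ p.2)⁻¹ * y p.1 * t ^ p.2).prod =
      (L.map fun p => (t ^ (p.2 - ε))⁻¹ * y p.1 * t ^ (p.2 - ε)).prod * t ^ ε := by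
  induction L with
  | nil => simp
  | cons p L ih =>
    have shift : t ^ ε * ((t ^ p.2)⁻¹ * y p.1 * t ^ p.2) =
        (t ^ (p.2 - ε))⁻¹ * y p.1 * t ^ (p.2 - ε) * t ^ ε := by
      rw [zpow_sub]; group
    simp only [List.map_cons, List.prod_cons]
    rw [← mul_assoc, shift, mul_assoc, ih]
    simp only [mul_assoc]

open FreeGroup in
theorem FreeGroup.exists_mk_eq_prod_conj_mul_zpow (l : List ((α ⊕ Unit) × Bool)) :
    ∃ (L : List (FreeGroup α × ℤ)) (m : ℤ),
      mk l = (L.map fun p =>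
        (of (Sum.inr ()) ^ p.2)⁻¹ * map Sum.inl p.1 * of (Sum.inr ()) ^ p.2).prod *
          of (Sum.inr ()) ^ m ∧
      ∀ p ∈ L, |p.2| ≤ l.length := by
  induction l with
  | nil => exact ⟨[], 0, by simp [← one_eq_mk], by simp⟩
  | cons x l ih =>
    obtain ⟨L, m, hl, hL⟩ := ih
    have hcons : mk (x :: l) = mk [x] * mk l := by rw [mul_mk]; rfl
    obtain ⟨a | u, b⟩ := x
    · refine ⟨(mk [(a, b)], 0) :: L, m, ?_, ?_⟩
      · simp [hcons, hl, map.mk, mul_assoc]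
      · simp only [List.mem_cons, List.length_cons, Nat.cast_succ]
        rintro p (rfl | hp)
        · simp; omega
        · have := hL p hp; omega
    · obtain ⟨ε, hε, hx⟩ : ∃ ε : ℤ, |ε| ≤ 1 ∧ mk [(Sum.inr u, b)] = of (Sum.inr ()) ^ ε := by
        cases b
        · exact ⟨-1, by simp, by rw [zpow_neg_one]; rfl⟩
        · exact ⟨1, by simp, by rw [zpow_one]; rfl⟩
      refine ⟨L.map fun p => (p.1, p.2 - ε), ε + m, ?_, ?_⟩
      · rw [hcons, hx, hl, ← mul_assoc, zpow_mul_prod_conj_zpow, List.map_map, mul_assoc,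
          ← zpow_add]
        rfl
      · simp only [List.mem_map, List.length_cons, Nat.cast_succ]
        rintro _ ⟨p, hp, rfl⟩
        have := hL p hp
        have := abs_sub p.2 ε
        dsimp only
        omega

end Decomposition

section Model

open RegularWreathProduct

variable {D Q : Type*} [Group D] [Group Q]

def baseHom : (Q → D) →* D ≀ᵣ Q where
  toFun f := ⟨f, 1⟩
  map_one' := rfl
  map_mul' f g := by ext <;> simp [mul_def]

theorem inl_inv_mul_baseHom_mul_inl (q : Q) (f : Q → D) :
    (inl q)⁻¹ * baseHom f * inl q = baseHom fun x => f (q * x) := by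
  ext <;> simp [mul_def, baseHom, inl, inv_left, inv_right]

theorem baseHom_mul_inl_eq_one_iff {f : Q → D} {q : Q} :
    baseHom f * inl q = 1 ↔ f = 1 ∧ q = 1 := by
  refine ⟨fun h => ⟨?_, ?_⟩, fun ⟨hf, hq⟩ => by simp [hf, hq]⟩
  · simpa [mul_def, baseHom, inl, ← Pi.one_def] using congrArg left h
  · simpa [mul_def, baseHom, inl] using congrArg right h

def wreathEval : FreeGroup (K ⊕ Unit) →* K ≀ᵣ Multiplicative ℤ :=
  FreeGroup.lift (Sum.elim (fun a => baseHom (Pi.mulSingle 1 a)) fun _ => inl (ofAdd 1))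

theorem wreathEval_tGen_zpow (m : ℤ) : wreathEval K (tGen K ^ m) = inl (ofAdd m) := by
  rw [map_zpow, tGen, wreathEval, FreeGroup.lift_apply_of, Sum.elim_inr, ← map_zpow,
    ← ofAdd_zsmul, smul_eq_mul, mul_one]

theorem wreathEval_map_inl (u : FreeGroup K) :
    wreathEval K (FreeGroup.map Sum.inl u) = baseHom (Pi.mulSingle 1 (FreeGroup.lift id u)) := by
  have : (wreathEval K).comp (FreeGroup.map Sum.inl) =
      (baseHom.comp (MonoidHom.mulSingle _ 1)).comp (FreeGroup.lift id) :=
    FreeGroup.ext_hom _ _ fun a => by simp [wreathEval]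
  exact DFunLike.congr_fun this u

theorem wreathEval_conjT (u : FreeGroup K) (i : ℤ) :
    wreathEval K (conjT K (FreeGroup.map Sum.inl u) i) =
      baseHom (Pi.mulSingle (ofAdd (-i)) (FreeGroup.lift id u)) := by
  rw [conjT, map_mul, map_mul, map_inv, wreathEval_tGen_zpow, wreathEval_map_inl,
    inl_inv_mul_baseHom_mul_inl]
  congr 1
  funext x
  simp [Pi.mulSingle_apply, mul_eq_one_iff_eq_inv']

theorem wreathR_subset_ker_wreathEval : wreathR K ⊆ (wreathEval K).ker := by
  rintro _ (⟨u, ⟨-, hu⟩, rfl⟩ | ⟨a, b, i, j, hij, rfl⟩)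
  · simp [wreathEval_map_inl, hu]
  · rw [SetLike.mem_coe, MonoidHom.mem_ker, map_commE, commE_eq_one_iff]
    rw [yGen_eq_map_inl_of, yGen_eq_map_inl_of, wreathEval_conjT, wreathEval_conjT]
    exact (Pi.mulSingle_commute (by simpa using hij) _ _).map baseHom

theorem wreathEval_prod_conjT (L : List (FreeGroup K × ℤ)) :
    wreathEval K (L.map fun p => conjT K (FreeGroup.map Sum.inl p.1) p.2).prod =
      baseHom (L.map fun p => Pi.mulSingle (ofAdd (-p.2)) (FreeGroup.lift id p.1)).prod := by
  simp [map_list_prod, Function.comp_def, wreathEval_conjT]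

end Model

theorem yGen_mul_mul_inv_mem_wreathS (a b : K) :
    yGen K a * yGen K b * (yGen K (a * b))⁻¹ ∈ wreathS K := by
  let := Classical.decEq K
  refine ⟨.of a * .of b * (.of (a * b))⁻¹, ⟨?_, by simp⟩, by simp [yGen]⟩
  have h₁ := FreeGroup.norm_mul_le (FreeGroup.of a * .of b) (.of (a * b))⁻¹
  have h₂ := FreeGroup.norm_mul_le (FreeGroup.of a) (.of b)
  rw [FreeGroup.norm_inv_eq, FreeGroup.norm_of] at h₁
  rw [FreeGroup.norm_of, FreeGroup.norm_of] at h₂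
  exact h₁.trans (by omega)

section Truncated

variable {K} {Q : Type*} [Group Q] {k : ℕ} (σ : FreeGroup (K ⊕ Unit) →* Q)
  (hσ : wreathRk K k ⊆ σ.ker)

def yHom : K →* Q :=
  MonoidHom.mk' (fun a => σ (yGen K a)) fun a b => by
    have h := hσ (Or.inl (yGen_mul_mul_inv_mem_wreathS K a b))
    rw [SetLike.mem_coe, MonoidHom.mem_ker, map_mul, map_inv, mul_inv_eq_one] at h
    rw [← h, map_mul]

def levelHom (i : ℤ) : K →* Q :=
  (MulAut.conj (σ (tGen K ^ i))⁻¹).toMonoidHom.comp (yHom σ hσ)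

theorem map_conjT_map_inl (u : FreeGroup K) (i : ℤ) :
    σ (conjT K (FreeGroup.map Sum.inl u) i) = levelHom σ hσ i (FreeGroup.lift id u) := by
  have : σ.comp (FreeGroup.map Sum.inl) = (yHom σ hσ).comp (FreeGroup.lift id) :=
    FreeGroup.ext_hom _ _ fun a => by simp [yHom, yGen]
  rw [levelHom, MonoidHom.comp_apply, ← MonoidHom.comp_apply (yHom σ hσ), ← this]
  simp only [conjT, map_mul, map_inv, MonoidHom.comp_apply, MulEquiv.coe_toMonoidHom,
    MulAut.conj_inv_apply]

theorem commute_levelHom {i j : ℤ} (hij : i ≠ j) (hi : |i| ≤ k) (hj : |j| ≤ k) (a b : K) :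
    Commute (levelHom σ hσ i a) (levelHom σ hσ j b) := by
  have h := hσ (Or.inr ⟨a, b, i, j, hij, hi, hj, rfl⟩)
  rw [SetLike.mem_coe, MonoidHom.mem_ker, map_commE, commE_eq_one_iff, yGen_eq_map_inl_of,
    yGen_eq_map_inl_of,
    map_conjT_map_inl, map_conjT_map_inl] at h
  simpa using h

/-- Position `ofAdd (-i)` of the base group carries level `i` (see `wreathEval_conjT`); positions
with `|i| > k` are ignored. -/
noncomputable def truncatedBaseHom : (Multiplicative ℤ → K) →* Q :=
  (MonoidHom.noncommPiCoprod (fun i : Set.Icc (-(k : ℤ)) k => levelHom σ hσ i)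
    fun i j hij => commute_levelHom σ hσ (Subtype.coe_injective.ne hij)
      (abs_le.2 i.2) (abs_le.2 j.2)).comp
  (MonoidHom.pi fun i => Pi.evalMonoidHom _ (ofAdd (-(i : ℤ))))

theorem truncatedBaseHom_mulSingle {i : ℤ} (hi : |i| ≤ k) (a : K) :
    truncatedBaseHom σ hσ (Pi.mulSingle (ofAdd (-i)) a) = levelHom σ hσ i a := by
  have : (MonoidHom.pi fun j : Set.Icc (-(k : ℤ)) k => Pi.evalMonoidHom (fun _ => K)
      (ofAdd (-(j : ℤ)))) (Pi.mulSingle (ofAdd (-i)) a) = Pi.mulSingle ⟨i, abs_le.1 hi⟩ a := by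
    funext j
    simp [Pi.mulSingle_apply, Subtype.ext_iff]
  rw [truncatedBaseHom, MonoidHom.comp_apply, this]
  exact MonoidHom.noncommPiCoprod_mulSingle _ _ _

theorem map_prod_conjT_eq_truncatedBaseHom (L : List (FreeGroup K × ℤ))
    (hL : ∀ p ∈ L, |p.2| ≤ k) :
    σ (L.map fun p => conjT K (FreeGroup.map Sum.inl p.1) p.2).prod =
      truncatedBaseHom σ hσ
        (L.map fun p => Pi.mulSingle (ofAdd (-p.2)) (FreeGroup.lift id p.1)).prod := by
  rw [map_list_prod, map_list_prod, List.map_map, List.map_map]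
  exact congrArg List.prod <| List.map_congr_left fun p hp =>
    (map_conjT_map_inl σ hσ _ _).trans (truncatedBaseHom_mulSingle σ hσ (hL p hp) _).symm

end Truncated

theorem wreath_word_in_truncated_normalClosure (k : ℕ)
    (w : FreeGroup (K ⊕ Unit)) (hw : wnorm w ≤ k)
    (hmem : w ∈ Subgroup.normalClosure (wreathR K)) :
    w ∈ Subgroup.normalClosure (wreathRk K k) := by
  let := Classical.decEq (K ⊕ Unit)
  obtain ⟨L, m, hwL, hL⟩ := FreeGroup.exists_mk_eq_prod_conj_mul_zpow w.toWord
  rw [FreeGroup.mk_toWord] at hwL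
  replace hwL : w = (L.map fun p => conjT K (FreeGroup.map Sum.inl p.1) p.2).prod * tGen K ^ m :=
    hwL
  have hLk : ∀ p ∈ L, |p.2| ≤ k := fun p hp => (hL p hp).trans (by exact_mod_cast hw)
  obtain ⟨hg, hm⟩ := baseHom_mul_inl_eq_one_iff.1 <| by
    rw [← wreathEval_prod_conjT K L, ← wreathEval_tGen_zpow K m, ← map_mul, ← hwL]
    exact Subgroup.normalClosure_le_normal (wreathR_subset_ker_wreathEval K) hmem
  have hσ : wreathRk K k ⊆ (QuotientGroup.mk' (Subgroup.normalClosure (wreathRk K k))).ker := by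
    rw [QuotientGroup.ker_mk']
    exact Subgroup.subset_normalClosure
  rw [← QuotientGroup.ker_mk' (Subgroup.normalClosure (wreathRk K k)), MonoidHom.mem_ker, hwL,
    map_mul, map_prod_conjT_eq_truncatedBaseHom _ hσ L hLk, hg, ofAdd_eq_one.1 hm]
  simp

end IsoSpecPaper
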